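/- arXiv:1903.03801 — 4 statements merged into one kernel-verified Lean document; each statement's English description precedes it below -/
import Mathlib

section
/- For all real s with |s| ≥ 1, we have |cos(s) + i·√(is)·sin(s)| ≥ 1/3, where √(is) denotes the principal square root of is. -/
open Complex

/-- For all real `s` with `|s| ≥ 1`, `|cos s + i·√(is)·sin s| ≥ 1/3`,
where `√(is)` is the principal square root. -/
theorem stmt_0 (s : ℝ) (hs : 1 ≤ |s|) :
    (1 : ℝ) / 3 ≤ ‖
      (Complex.cos s + Complex.I * (Complex.I * s) ^ ((1 : ℂ) / 2) * Complex.sin s)‖ := by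
  have hs0 : s ≠ 0 := by
    intro h; rw [h] at hs; simp at hs; linarith
  have hne : (Complex.I * (s : ℂ)) ≠ 0 := by
    exact mul_ne_zero Complex.I_ne_zero (by exact_mod_cast hs0)
  set w : ℂ := (Complex.I * (s : ℂ)) ^ ((1 : ℂ)/2) with hw
  have hsq : w * w = Complex.I * (s : ℂ) := by
    rw [hw, ← Complex.cpow_add _ _ hne]
    norm_num
  have h1 : w.re * w.re - w.im * w.im = 0 := by
    have := congrArg Complex.re hsq
    simpa [Complex.mul_re, Complex.mul_im] using this
  have h2 : w.re * w.im + w.im * w.re = s := by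
    have := congrArg Complex.im hsq
    simpa [Complex.mul_re, Complex.mul_im] using this
  have hx2 : w.re ^ 2 = |s| / 2 := by
    have habs : |s| ^ 2 = s ^ 2 := sq_abs s
    have hxy2 : w.re ^ 2 = w.im ^ 2 := by nlinarith [h1]
    have hs2 : s ^ 2 = 4 * w.re ^ 2 * w.im ^ 2 := by rw [← h2]; ring
    have hfac : (w.re ^ 2 - |s| / 2) * (w.re ^ 2 + |s| / 2) = 0 := by
      linear_combination (-(1:ℝ)/4) * habs + (-(1:ℝ)/4) * hs2 + w.re ^ 2 * hxy2
    rcases mul_eq_zero.1 hfac with h | h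
    · linarith
    · nlinarith [sq_nonneg w.re]
  have hy2 : w.im ^ 2 = |s| / 2 := by nlinarith [h1, hx2]
  set z : ℂ := Complex.cos s + Complex.I * w * Complex.sin s with hz
  have hre : z.re = Real.cos s - w.im * Real.sin s := by
    simp [hz, ← Complex.ofReal_cos, ← Complex.ofReal_sin, Complex.mul_re, Complex.mul_im]
    ring
  have him : z.im = w.re * Real.sin s := by
    simp [hz, ← Complex.ofReal_cos, ← Complex.ofReal_sin, Complex.mul_re, Complex.mul_im]
  have hA2 : ‖z‖ ^ 2 = z.re ^ 2 + z.im ^ 2 := by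
    rw [Complex.sq_norm, Complex.normSq_apply]; ring
  have hpyth : Real.sin s ^ 2 + Real.cos s ^ 2 = 1 := Real.sin_sq_add_cos_sq s
  have key : (1/9 : ℝ) ≤ ‖z‖ ^ 2 := by
    rw [hA2, hre, him]
    nlinarith [sq_nonneg (Real.cos s - w.im * Real.sin s), sq_nonneg (Real.cos s + w.im * Real.sin s), sq_nonneg (Real.sin s), sq_nonneg (Real.cos s), sq_nonneg (w.im * Real.sin s), sq_nonneg (3 * Real.cos s - w.im * Real.sin s)]
  nlinarith [norm_nonneg z, key]
end

section
/- There exists a constant C ≥ 0 such that for all f ∈ H¹(-1,0), g ∈ L²(-1,0), s ∈ ℝ, and ξ ∈ [-1,0], one has |∫_{-1}^{ξ} sin(s(ξ-r))·(i·s·f(r) + g(r)) dr| ≤ C·‖f‖_{H¹} + ‖g‖_{L²}. -/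
open MeasureTheory Set
open scoped Interval

namespace Stmt3Aux

lemma meas_one : (volume : Measure ℝ) (Ioc (-1 : ℝ) 0) = 1 := by
  rw [Real.volume_Ioc]; norm_num

instance : IsFiniteMeasure (volume.restrict (Ioc (-1 : ℝ) 0)) :=
  ⟨by rw [Measure.restrict_apply_univ, meas_one]; exact ENNReal.one_lt_top⟩

lemma integrableOn_of_memL2 {h : ℝ → ℂ}
    (hh : MemLp h 2 (volume.restrict (Ioc (-1 : ℝ) 0))) :
    IntegrableOn h (Ioc (-1 : ℝ) 0) :=
  memLp_one_iff_integrable.mp (hh.mono_exponent (by norm_num))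

lemma l1_le_sqrt {h : ℝ → ℂ}
    (hh : MemLp h 2 (volume.restrict (Ioc (-1 : ℝ) 0))) :
    ∫ r in Ioc (-1 : ℝ) 0, ‖h r‖ ≤ Real.sqrt (∫ r in Ioc (-1 : ℝ) 0, ‖h r‖ ^ 2) := by
  set μ := volume.restrict (Ioc (-1 : ℝ) 0) with hμ
  have hconj : Real.HolderConjugate 2 2 := by constructor <;> norm_num
  have h1 : MemLp (fun r => ‖h r‖) (ENNReal.ofReal 2) μ := by
    have := hh.norm
    convert this using 2
    norm_num
  have h2 : MemLp (fun _ : ℝ => (1 : ℝ)) (ENNReal.ofReal 2) μ := memLp_const 1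
  have key := integral_mul_le_Lp_mul_Lq_of_nonneg hconj
    (Filter.Eventually.of_forall fun x => norm_nonneg (h x))
    (Filter.Eventually.of_forall fun _ => zero_le_one) h1 h2
  have hmeas : ∫ _ : ℝ, (1:ℝ) ^ (2:ℝ) ∂μ = 1 := by
    simp [hμ, meas_one]
  rw [hmeas] at key
  simp only [mul_one, Real.one_rpow] at key
  calc ∫ r, ‖h r‖ ∂μ ≤ (∫ r, ‖h r‖ ^ (2:ℝ) ∂μ) ^ (1/2 : ℝ) := key
    _ = Real.sqrt (∫ r, ‖h r‖ ^ 2 ∂μ) := by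
        rw [Real.sqrt_eq_rpow]
        congr 1
        apply integral_congr_ae
        filter_upwards with x
        rw [show (2:ℝ) = ((2:ℕ):ℝ) by norm_num, Real.rpow_natCast]

lemma intervalInt {h : ℝ → ℂ} (hh : IntegrableOn h (Ioc (-1:ℝ) 0))
    {x ξ : ℝ} (hx : x ∈ Icc (-1:ℝ) 0) (hξ : ξ ∈ Icc (-1:ℝ) 0) :
    IntervalIntegrable h volume x ξ := by
  rw [intervalIntegrable_iff]
  refine hh.mono_set ?_
  rcases le_total x ξ with hle | hle
  · rw [uIoc_of_le hle]; exact Ioc_subset_Ioc hx.1 hξ.2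
  · rw [uIoc_of_ge hle]; exact Ioc_subset_Ioc hξ.1 hx.2

lemma intnorm_mono {h : ℝ → ℂ} (hh : IntegrableOn h (Ioc (-1:ℝ) 0))
    {x ξ : ℝ} (hx : x ∈ Icc (-1:ℝ) 0) (hξ : ξ ∈ Icc (-1:ℝ) 0) :
    ∫ r in Ι x ξ, ‖h r‖ ≤ ∫ r in Ioc (-1:ℝ) 0, ‖h r‖ := by
  have hsub : Ι x ξ ⊆ Ioc (-1:ℝ) 0 := by
    rcases le_total x ξ with hle | hle
    · rw [uIoc_of_le hle]; exact Ioc_subset_Ioc hx.1 hξ.2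
    · rw [uIoc_of_ge hle]; exact Ioc_subset_Ioc hξ.1 hx.2
  exact setIntegral_mono_set hh.norm
    (Filter.Eventually.of_forall fun r => norm_nonneg _)
    (HasSubset.Subset.eventuallyLE hsub)

lemma ptwise {f f' : ℝ → ℂ}
    (hderiv : ∀ r ∈ Icc (-1 : ℝ) 0, HasDerivAt f (f' r) r)
    (hf : IntegrableOn f (Ioc (-1:ℝ) 0)) (hf' : IntegrableOn f' (Ioc (-1:ℝ) 0))
    {ξ : ℝ} (hξ : ξ ∈ Icc (-1:ℝ) 0) :
    ‖f ξ‖ ≤ (∫ r in Ioc (-1:ℝ) 0, ‖f r‖) + ∫ r in Ioc (-1:ℝ) 0, ‖f' r‖ := by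
  set K := ∫ r in Ioc (-1:ℝ) 0, ‖f' r‖ with hK
  have hbd : ∀ x ∈ Ioc (-1:ℝ) 0, ‖f ξ‖ ≤ ‖f x‖ + K := by
    intro x hx'
    have hx : x ∈ Icc (-1:ℝ) 0 := Ioc_subset_Icc_self hx'
    have hftc := intervalIntegral.integral_eq_sub_of_hasDerivAt
      (f := f) (f' := f') (fun y hy => hderiv y (uIcc_subset_Icc hx hξ hy))
      (intervalInt hf' hx hξ)
    have hrw : f ξ = f x + ∫ y in x..ξ, f' y := by rw [hftc]; ring
    rw [hrw]
    refine (norm_add_le _ _).trans (add_le_add (le_refl _) ?_)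
    exact intervalIntegral.norm_integral_le_integral_norm_uIoc.trans
      (intnorm_mono hf' hx hξ)
  have hconst : ∫ _ in Ioc (-1:ℝ) 0, ‖f ξ‖ = ‖f ξ‖ := by
    rw [setIntegral_const]; simp [meas_one]
  have hKint : IntegrableOn (fun _ : ℝ => K) (Ioc (-1:ℝ) 0) := integrableOn_const (by
    rw [meas_one]; exact ENNReal.one_ne_top)
  calc ‖f ξ‖ = ∫ _ in Ioc (-1:ℝ) 0, ‖f ξ‖ := hconst.symm
    _ ≤ ∫ x in Ioc (-1:ℝ) 0, (‖f x‖ + K) := by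
        refine setIntegral_mono_on (integrableOn_const (by
          rw [meas_one]; exact ENNReal.one_ne_top))
          (hf.norm.add hKint) measurableSet_Ioc hbd
    _ = (∫ x in Ioc (-1:ℝ) 0, ‖f x‖) + ∫ _ in Ioc (-1:ℝ) 0, K := by
        rw [integral_add hf.norm hKint]
    _ = (∫ x in Ioc (-1:ℝ) 0, ‖f x‖) + K := by
        rw [setIntegral_const]; simp [meas_one]

lemma bound_weighted {h φ : ℝ → ℂ} (hh : IntegrableOn h (Ioc (-1:ℝ) 0))
    (hφm : Continuous φ) (hφ : ∀ x, ‖φ x‖ ≤ 1) {ξ : ℝ} (hξ : ξ ∈ Icc (-1:ℝ) 0) :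
    ‖∫ r in (-1:ℝ)..ξ, φ r * h r‖ ≤ ∫ r in Ioc (-1:ℝ) 0, ‖h r‖ := by
  have hsub : Ι (-1:ℝ) ξ ⊆ Ioc (-1:ℝ) 0 := by
    rw [uIoc_of_le hξ.1]; exact Ioc_subset_Ioc le_rfl hξ.2
  have hint : IntegrableOn (fun r => φ r * h r) (Ι (-1:ℝ) ξ) :=
    (hh.mono_set hsub).bdd_mul hφm.aestronglyMeasurable (Filter.Eventually.of_forall hφ)
  calc ‖∫ r in (-1:ℝ)..ξ, φ r * h r‖ ≤ ∫ r in Ι (-1:ℝ) ξ, ‖φ r * h r‖ :=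
        intervalIntegral.norm_integral_le_integral_norm_uIoc
    _ ≤ ∫ r in Ι (-1:ℝ) ξ, ‖h r‖ := by
        refine setIntegral_mono_on hint.norm ((hh.mono_set hsub).norm)
          measurableSet_uIoc (fun x _ => ?_)
        rw [norm_mul]
        exact mul_le_of_le_one_left (norm_nonneg _) (hφ x)
    _ ≤ ∫ r in Ioc (-1:ℝ) 0, ‖h r‖ :=
        setIntegral_mono_set hh.norm
          (Filter.Eventually.of_forall fun r => norm_nonneg _)
          (HasSubset.Subset.eventuallyLE hsub)

lemma intervalInt_weighted {h φ : ℝ → ℂ} (hh : IntegrableOn h (Ioc (-1:ℝ) 0))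
    (hφm : Continuous φ) (hφ : ∀ x, ‖φ x‖ ≤ 1) {ξ : ℝ} (hξ : ξ ∈ Icc (-1:ℝ) 0) :
    IntervalIntegrable (fun r => φ r * h r) volume (-1) ξ := by
  rw [intervalIntegrable_iff]
  have hsub : Ι (-1:ℝ) ξ ⊆ Ioc (-1:ℝ) 0 := by
    rw [uIoc_of_le hξ.1]; exact Ioc_subset_Ioc le_rfl hξ.2
  exact (hh.mono_set hsub).bdd_mul hφm.aestronglyMeasurable (Filter.Eventually.of_forall hφ)

-- derivative of r ↦ cos (s*(ξ-r)) as a map ℝ → ℂ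
lemma hasDeriv_cos (s ξ x : ℝ) :
    HasDerivAt (fun r : ℝ => ((Real.cos (s * (ξ - r)) : ℝ) : ℂ))
      ((s * Real.sin (s * (ξ - x)) : ℝ) : ℂ) x := by
  have hu : HasDerivAt (fun r : ℝ => s * (ξ - r)) (-s) x := by
    simpa using ((hasDerivAt_id x).const_sub ξ).const_mul s
  have hc : HasDerivAt (fun r : ℝ => Real.cos (s * (ξ - r)))
      (-Real.sin (s * (ξ - x)) * (-s)) x :=
    (Real.hasDerivAt_cos _).comp x hu
  have := hc.ofReal_comp
  convert this using 2
  ring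

end Stmt3Aux

open Stmt3Aux in
/-- There exists `C ≥ 0` such that for all `f ∈ H¹(-1,0)` (given with its derivative `f'`),
`g ∈ L²(-1,0)`, `s ∈ ℝ` and `ξ ∈ [-1,0]`,
`|∫_{-1}^{ξ} sin(s(ξ-r))·(i·s·f(r) + g(r)) dr| ≤ C·‖f‖_{H¹} + ‖g‖_{L²}`. -/
theorem stmt_3 :
    ∃ C : ℝ, 0 ≤ C ∧ ∀ (f f' g : ℝ → ℂ),
      (∀ r ∈ Icc (-1 : ℝ) 0, HasDerivAt f (f' r) r) →
      MemLp f 2 (volume.restrict (Ioc (-1 : ℝ) 0)) →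
      MemLp f' 2 (volume.restrict (Ioc (-1 : ℝ) 0)) →
      MemLp g 2 (volume.restrict (Ioc (-1 : ℝ) 0)) →
      ∀ (s : ℝ), ∀ ξ ∈ Icc (-1 : ℝ) 0,
        ‖∫ r in (-1 : ℝ)..ξ, Complex.sin (s * (ξ - r)) * (Complex.I * s * f r + g r)‖ ≤
          C * Real.sqrt ((∫ r in Ioc (-1 : ℝ) 0, ‖f r‖ ^ 2) +
                (∫ r in Ioc (-1 : ℝ) 0, ‖f' r‖ ^ 2)) +
            Real.sqrt (∫ r in Ioc (-1 : ℝ) 0, ‖g r‖ ^ 2) := by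
  refine ⟨6, by norm_num, ?_⟩
  intro f f' g hderiv hf2 hf'2 hg2 s ξ hξ
  have hm1 : (-1 : ℝ) ∈ Icc (-1:ℝ) 0 := by constructor <;> norm_num
  have hf : IntegrableOn f (Ioc (-1:ℝ) 0) := integrableOn_of_memL2 hf2
  have hf' : IntegrableOn f' (Ioc (-1:ℝ) 0) := integrableOn_of_memL2 hf'2
  have hg : IntegrableOn g (Ioc (-1:ℝ) 0) := integrableOn_of_memL2 hg2
  -- shorthand
  set vc : ℝ → ℂ := fun r => ((Real.cos (s * (ξ - r)) : ℝ) : ℂ) with hvc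
  set vs : ℝ → ℂ := fun r => ((Real.sin (s * (ξ - r)) : ℝ) : ℂ) with hvs
  have hvc_cont : Continuous vc := by
    apply Complex.continuous_ofReal.comp; fun_prop
  have hvs_cont : Continuous vs := by
    apply Complex.continuous_ofReal.comp; fun_prop
  have hvc_bd : ∀ x, ‖vc x‖ ≤ 1 := fun x => by
    rw [hvc, Complex.norm_real, Real.norm_eq_abs]; exact Real.abs_cos_le_one _
  have hvs_bd : ∀ x, ‖vs x‖ ≤ 1 := fun x => by
    rw [hvs, Complex.norm_real, Real.norm_eq_abs]; exact Real.abs_sin_le_one _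
  -- integration by parts
  have hibp : ∫ r in (-1:ℝ)..ξ, f r * ((s * Real.sin (s * (ξ - r)) : ℝ) : ℂ)
      = f ξ * vc ξ - f (-1) * vc (-1) - ∫ r in (-1:ℝ)..ξ, f' r * vc r := by
    refine intervalIntegral.integral_mul_deriv_eq_deriv_mul
      (fun x hx => hderiv x (uIcc_subset_Icc hm1 hξ hx))
      (fun x _ => hasDeriv_cos s ξ x)
      (intervalInt hf' hm1 hξ) ?_
    exact (Continuous.intervalIntegrable (by
      apply Complex.continuous_ofReal.comp; fun_prop) _ _)
  -- rewrite the integrand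
  have hsplit : ∫ r in (-1:ℝ)..ξ, Complex.sin (s * (ξ - r)) * (Complex.I * s * f r + g r)
      = Complex.I * (∫ r in (-1:ℝ)..ξ, f r * ((s * Real.sin (s * (ξ - r)) : ℝ) : ℂ))
        + ∫ r in (-1:ℝ)..ξ, vs r * g r := by
    rw [← intervalIntegral.integral_const_mul, ← intervalIntegral.integral_add]
    · apply intervalIntegral.integral_congr
      intro r _
      show Complex.sin ((s:ℂ) * ((ξ:ℂ) - (r:ℂ))) * (Complex.I * s * f r + g r)
          = Complex.I * (f r * ((s * Real.sin (s * (ξ - r)) : ℝ) : ℂ)) + vs r * g r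
      have hsin : Complex.sin ((s : ℂ) * ((ξ : ℂ) - (r : ℂ)))
          = ((Real.sin (s * (ξ - r)) : ℝ) : ℂ) := by
        rw [Complex.ofReal_sin]; push_cast; ring_nf
      rw [hsin]
      simp only [hvs]
      push_cast
      ring
    · rw [intervalIntegrable_iff]
      have hsub : Ι (-1:ℝ) ξ ⊆ Ioc (-1:ℝ) 0 := by
        rw [uIoc_of_le hξ.1]; exact Ioc_subset_Ioc le_rfl hξ.2
      have hcont : Continuous fun r : ℝ => Complex.I * ((s * Real.sin (s * (ξ - r)) : ℝ) : ℂ) := by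
        have : Continuous fun r : ℝ => ((s * Real.sin (s * (ξ - r)) : ℝ) : ℂ) :=
          Complex.continuous_ofReal.comp (by fun_prop)
        exact continuous_const.mul this
      have hb : IntegrableOn
          (fun r => (Complex.I * ((s * Real.sin (s * (ξ - r)) : ℝ) : ℂ)) * f r)
          (Ι (-1:ℝ) ξ) := by
        refine (hf.mono_set hsub).bdd_mul hcont.aestronglyMeasurable (c := |s|) (Filter.Eventually.of_forall fun x => ?_)
        rw [norm_mul, Complex.norm_I, one_mul, Complex.norm_real, Real.norm_eq_abs, abs_mul]
        exact mul_le_of_le_one_right (abs_nonneg s) (Real.abs_sin_le_one _)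
      exact hb.congr (Filter.Eventually.of_forall fun r => by ring)
    · exact intervalInt_weighted hg hvs_cont hvs_bd hξ
  rw [hsplit, hibp]
  set a := ∫ r in Ioc (-1:ℝ) 0, ‖f r‖ with ha
  set b := ∫ r in Ioc (-1:ℝ) 0, ‖f' r‖ with hb
  set c := ∫ r in Ioc (-1:ℝ) 0, ‖g r‖ with hc
  have hfa : ‖f ξ‖ ≤ a + b := ptwise hderiv hf hf' hξ
  have hfm : ‖f (-1)‖ ≤ a + b := ptwise hderiv hf hf' hm1
  have h3 : ‖∫ r in (-1:ℝ)..ξ, f' r * vc r‖ ≤ b := by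
    have he : (∫ r in (-1:ℝ)..ξ, f' r * vc r) = ∫ r in (-1:ℝ)..ξ, vc r * f' r := by
      apply intervalIntegral.integral_congr; intro r _; ring
    rw [he]
    exact bound_weighted hf' hvc_cont hvc_bd hξ
  have h4 : ‖∫ r in (-1:ℝ)..ξ, vs r * g r‖ ≤ c :=
    bound_weighted hg hvs_cont hvs_bd hξ
  have hbig : ‖Complex.I * (f ξ * vc ξ - f (-1) * vc (-1) - ∫ r in (-1:ℝ)..ξ, f' r * vc r)
      + ∫ r in (-1:ℝ)..ξ, vs r * g r‖ ≤ ((a + b) + (a + b) + b) + c := by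
    refine (norm_add_le _ _).trans (add_le_add ?_ h4)
    rw [norm_mul, Complex.norm_I, one_mul]
    refine (norm_sub_le _ _).trans (add_le_add ((norm_sub_le _ _).trans (add_le_add ?_ ?_)) h3)
    · rw [norm_mul]
      exact (mul_le_of_le_one_right (norm_nonneg _) (hvc_bd ξ)).trans hfa
    · rw [norm_mul]
      exact (mul_le_of_le_one_right (norm_nonneg _) (hvc_bd (-1))).trans hfm
  refine hbig.trans ?_
  set A := ∫ r in Ioc (-1:ℝ) 0, ‖f r‖ ^ 2 with hA
  set B := ∫ r in Ioc (-1:ℝ) 0, ‖f' r‖ ^ 2 with hB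
  set G := ∫ r in Ioc (-1:ℝ) 0, ‖g r‖ ^ 2 with hG
  have hA0 : 0 ≤ A := integral_nonneg fun r => sq_nonneg _
  have hB0 : 0 ≤ B := integral_nonneg fun r => sq_nonneg _
  have haA : a ≤ Real.sqrt (A + B) :=
    (l1_le_sqrt hf2).trans (Real.sqrt_le_sqrt (by linarith))
  have hbB : b ≤ Real.sqrt (A + B) :=
    (l1_le_sqrt hf'2).trans (Real.sqrt_le_sqrt (by linarith))
  have hcG : c ≤ Real.sqrt G := l1_le_sqrt hg2
  have hs0 : 0 ≤ Real.sqrt (A + B) := Real.sqrt_nonneg _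
  linarith
end

section
/- There exists a constant C ≥ 0 such that for all f ∈ H¹(-1,0), g ∈ L²(-1,0), s ∈ ℝ, and ξ ∈ [-1,0], one has |∫_{-1}^{ξ} cos(s(ξ-r))·(i·s·f(r) + g(r)) dr| ≤ C·‖f‖_{H¹} + ‖g‖_{L²}. -/
open MeasureTheory Set

lemma aux_finite : IsFiniteMeasure (volume.restrict (Ioc (-1 : ℝ) 0)) :=
  ⟨by simp [Real.volume_Ioc]⟩

lemma aux_vol : (volume (Ioc (-1 : ℝ) 0)) = 1 := by
  rw [Real.volume_Ioc]; norm_num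

/-- Cauchy–Schwarz: L¹ norm bounded by L² norm on a set of measure 1. -/
lemma aux_l1_le_l2 (h : ℝ → ℂ) (hh : MemLp h 2 (volume.restrict (Ioc (-1 : ℝ) 0))) :
    ∫ r in Ioc (-1 : ℝ) 0, ‖h r‖ ≤ Real.sqrt (∫ r in Ioc (-1 : ℝ) 0, ‖h r‖ ^ 2) := by
  haveI := aux_finite
  have hpq : Real.HolderConjugate 2 2 := Real.HolderConjugate.two_two
  have h2 : (ENNReal.ofReal (2:ℝ)) = 2 := by norm_num
  have hnorm : MemLp (fun r => ‖h r‖) (ENNReal.ofReal (2:ℝ))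
      (volume.restrict (Ioc (-1 : ℝ) 0)) := h2 ▸ hh.norm
  have hone : MemLp (fun _ : ℝ => (1:ℝ)) (ENNReal.ofReal (2:ℝ))
      (volume.restrict (Ioc (-1 : ℝ) 0)) := memLp_const 1
  have := integral_mul_le_Lp_mul_Lq_of_nonneg hpq
    (Filter.Eventually.of_forall fun x => norm_nonneg (h x))
    (Filter.Eventually.of_forall fun _ => zero_le_one) hnorm hone
  simp only [mul_one, Real.rpow_two, one_pow] at this
  have hμ : (∫ _ in Ioc (-1 : ℝ) 0, (1:ℝ)) = 1 := by
    simp [aux_vol]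
  rw [hμ, Real.one_rpow, mul_one] at this
  rwa [Real.sqrt_eq_rpow]

/-- There exists `C ≥ 0` such that for all `f ∈ H¹(-1,0)` (given with its derivative `f'`),
`g ∈ L²(-1,0)`, `s ∈ ℝ` and `ξ ∈ [-1,0]`,
`|∫_{-1}^{ξ} cos(s(ξ-r))·(i·s·f(r) + g(r)) dr| ≤ C·‖f‖_{H¹} + ‖g‖_{L²}`. -/
theorem stmt_4 :
    ∃ C : ℝ, 0 ≤ C ∧ ∀ (f f' g : ℝ → ℂ),
      (∀ r ∈ Icc (-1 : ℝ) 0, HasDerivAt f (f' r) r) →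
      MemLp f 2 (volume.restrict (Ioc (-1 : ℝ) 0)) →
      MemLp f' 2 (volume.restrict (Ioc (-1 : ℝ) 0)) →
      MemLp g 2 (volume.restrict (Ioc (-1 : ℝ) 0)) →
      ∀ (s : ℝ), ∀ ξ ∈ Icc (-1 : ℝ) 0,
        ‖∫ r in (-1 : ℝ)..ξ, Complex.cos (s * (ξ - r)) * (Complex.I * s * f r + g r)‖ ≤
          C * Real.sqrt ((∫ r in Ioc (-1 : ℝ) 0, ‖f r‖ ^ 2) +
                (∫ r in Ioc (-1 : ℝ) 0, ‖f' r‖ ^ 2)) +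
            Real.sqrt (∫ r in Ioc (-1 : ℝ) 0, ‖g r‖ ^ 2) := by
  haveI := aux_finite
  refine ⟨3, by norm_num, fun f f' g hderiv hf hf' hg s ξ hξ => ?_⟩
  obtain ⟨hξ1, hξ0⟩ := hξ
  -- basic integrabilities
  have hfInt : IntegrableOn f (Ioc (-1 : ℝ) 0) volume := hf.integrable one_le_two
  have hf'Int : IntegrableOn f' (Ioc (-1 : ℝ) 0) volume := hf'.integrable one_le_two
  have hgInt : IntegrableOn g (Ioc (-1 : ℝ) 0) volume := hg.integrable one_le_two
  have hfII : IntervalIntegrable f volume (-1) ξ :=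
    (intervalIntegrable_iff_integrableOn_Ioc_of_le hξ1).2
      (hfInt.mono_set (Ioc_subset_Ioc le_rfl hξ0))
  have hf'II : IntervalIntegrable f' volume (-1) ξ :=
    (intervalIntegrable_iff_integrableOn_Ioc_of_le hξ1).2
      (hf'Int.mono_set (Ioc_subset_Ioc le_rfl hξ0))
  have hgII : IntervalIntegrable g volume (-1) ξ :=
    (intervalIntegrable_iff_integrableOn_Ioc_of_le hξ1).2
      (hgInt.mono_set (Ioc_subset_Ioc le_rfl hξ0))
  -- the cos function, real-valued
  have hcosc : Continuous fun r : ℝ => (Complex.cos (s * (ξ - r))) := by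
    fun_prop
  have hcos_eq : ∀ r : ℝ, Complex.cos ((s:ℂ) * ((ξ:ℂ) - (r:ℂ)))
      = ((Real.cos (s * (ξ - r)) : ℝ) : ℂ) := by
    intro r
    rw [Complex.ofReal_cos]
    push_cast
    ring_nf
  have hcosf : IntervalIntegrable (fun r => Complex.cos (s * (ξ - r)) * f r) volume (-1) ξ :=
    hfII.continuousOn_mul hcosc.continuousOn
  have hcosg : IntervalIntegrable (fun r => Complex.cos (s * (ξ - r)) * g r) volume (-1) ξ :=
    hgII.continuousOn_mul hcosc.continuousOn
  -- split the integral
  have hsplit : (∫ r in (-1 : ℝ)..ξ, Complex.cos (s * (ξ - r)) * (Complex.I * s * f r + g r))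
      = Complex.I * s * (∫ r in (-1 : ℝ)..ξ, Complex.cos (s * (ξ - r)) * f r)
        + ∫ r in (-1 : ℝ)..ξ, Complex.cos (s * (ξ - r)) * g r := by
    rw [← intervalIntegral.integral_const_mul, ← intervalIntegral.integral_add
      (hcosf.const_mul _) hcosg]
    refine intervalIntegral.integral_congr fun r _ => ?_
    ring
  -- integration by parts
  have hsin : ∀ r : ℝ, HasDerivAt (fun r : ℝ => ((Real.sin (s * (ξ - r)) : ℝ) : ℂ))
      ((-(s * Real.cos (s * (ξ - r))) : ℝ) : ℂ) r := by
    intro r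
    have h1 : HasDerivAt (fun r : ℝ => s * (ξ - r)) (-s) r := by
      simpa using ((hasDerivAt_id r).const_sub ξ).const_mul s
    have h2 : HasDerivAt (fun r : ℝ => Real.sin (s * (ξ - r)))
        (Real.cos (s * (ξ - r)) * (-s)) r := (Real.hasDerivAt_sin _).comp r h1
    have := h2.ofReal_comp
    convert this using 1
    push_cast
    ring
  have hibp := intervalIntegral.integral_mul_deriv_eq_deriv_mul
      (u := fun r : ℝ => ((Real.sin (s * (ξ - r)) : ℝ) : ℂ))
      (u' := fun r : ℝ => ((-(s * Real.cos (s * (ξ - r))) : ℝ) : ℂ))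
      (v := f) (v' := f') (a := (-1:ℝ)) (b := ξ)
      (fun x _ => hsin x)
      (fun x hx => hderiv x (by
        rw [uIcc_of_le hξ1] at hx
        exact ⟨hx.1, hx.2.trans hξ0⟩))
      (by apply Continuous.intervalIntegrable; fun_prop)
      hf'II
  -- rewrite IBP conclusion
  have hkey : (s : ℂ) * (∫ r in (-1 : ℝ)..ξ, Complex.cos (s * (ξ - r)) * f r)
      = (∫ r in (-1 : ℝ)..ξ, ((Real.sin (s * (ξ - r)) : ℝ) : ℂ) * f' r)
        + ((Real.sin (s * (ξ + 1)) : ℝ) : ℂ) * f (-1) := by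
    have h0 : ((Real.sin (s * (ξ - ξ)) : ℝ) : ℂ) = 0 := by simp
    simp only [h0, zero_mul] at hibp
    have : (∫ r in (-1 : ℝ)..ξ, ((-(s * Real.cos (s * (ξ - r))) : ℝ) : ℂ) * f r)
        = -((s:ℂ) * ∫ r in (-1 : ℝ)..ξ, Complex.cos (s * (ξ - r)) * f r) := by
      rw [← intervalIntegral.integral_const_mul, ← intervalIntegral.integral_neg]
      refine intervalIntegral.integral_congr fun r _ => ?_
      rw [hcos_eq r]
      push_cast
      ring
    rw [this] at hibp
    have hsub : s * (ξ - (-1)) = s * (ξ + 1) := by ring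
    rw [hsub] at hibp
    linear_combination -hibp
  -- bound on f(-1)
  have hfm1 : ‖f (-1)‖ ≤ (∫ r in Ioc (-1 : ℝ) 0, ‖f r‖) + ∫ r in Ioc (-1 : ℝ) 0, ‖f' r‖ := by
    have hstep : ∀ x ∈ Ioc (-1 : ℝ) 0, ‖f (-1)‖ ≤ ‖f x‖ + ∫ r in Ioc (-1 : ℝ) 0, ‖f' r‖ := by
      intro x hx
      have hftc : (∫ r in (-1 : ℝ)..x, f' r) = f x - f (-1) := by
        apply intervalIntegral.integral_eq_sub_of_hasDerivAt
        · intro t ht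
          rw [uIcc_of_le hx.1.le] at ht
          exact hderiv t ⟨ht.1, ht.2.trans hx.2⟩
        · exact (intervalIntegrable_iff_integrableOn_Ioc_of_le hx.1.le).2
            (hf'Int.mono_set (Ioc_subset_Ioc le_rfl hx.2))
      have h1 : ‖f (-1)‖ ≤ ‖f x‖ + ‖∫ r in (-1 : ℝ)..x, f' r‖ := by
        have : f (-1) = f x - (∫ r in (-1 : ℝ)..x, f' r) := by rw [hftc]; ring
        rw [this]
        exact norm_sub_le _ _
      have h2 : ‖∫ r in (-1 : ℝ)..x, f' r‖ ≤ ∫ r in Ioc (-1 : ℝ) 0, ‖f' r‖ := by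
        calc ‖∫ r in (-1 : ℝ)..x, f' r‖ ≤ ∫ r in (-1 : ℝ)..x, ‖f' r‖ :=
              intervalIntegral.norm_integral_le_integral_norm hx.1.le
          _ = ∫ r in Ioc (-1 : ℝ) x, ‖f' r‖ :=
              intervalIntegral.integral_of_le hx.1.le
          _ ≤ ∫ r in Ioc (-1 : ℝ) 0, ‖f' r‖ := by
              apply setIntegral_mono_set hf'Int.norm
                (Filter.Eventually.of_forall fun r => norm_nonneg _)
                (Ioc_subset_Ioc le_rfl hx.2).eventuallyLE
      linarith
    have hle : (∫ _ in Ioc (-1 : ℝ) 0, ‖f (-1)‖)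
        ≤ ∫ x in Ioc (-1 : ℝ) 0, (‖f x‖ + ∫ r in Ioc (-1 : ℝ) 0, ‖f' r‖) := by
      apply setIntegral_mono_on (integrableOn_const (by rw [aux_vol]; norm_num))
        (hfInt.norm.add (integrableOn_const (by rw [aux_vol]; norm_num)))
        measurableSet_Ioc hstep
    rw [setIntegral_const, integral_add hfInt.norm
      (integrableOn_const (by rw [aux_vol]; norm_num)), setIntegral_const] at hle
    simp only [measureReal_def, aux_vol, ENNReal.toReal_one, one_smul, smul_eq_mul, one_mul] at hle
    linarith
  -- L² bounds
  set A := ∫ r in Ioc (-1 : ℝ) 0, ‖f r‖ ^ 2 with hA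
  set B := ∫ r in Ioc (-1 : ℝ) 0, ‖f' r‖ ^ 2 with hB
  have hAnn : 0 ≤ A := setIntegral_nonneg measurableSet_Ioc fun r _ => by positivity
  have hBnn : 0 ≤ B := setIntegral_nonneg measurableSet_Ioc fun r _ => by positivity
  have hfl2 : (∫ r in Ioc (-1 : ℝ) 0, ‖f r‖) ≤ Real.sqrt A := aux_l1_le_l2 f hf
  have hf'l2 : (∫ r in Ioc (-1 : ℝ) 0, ‖f' r‖) ≤ Real.sqrt B := aux_l1_le_l2 f' hf'
  have hgl2 : (∫ r in Ioc (-1 : ℝ) 0, ‖g r‖) ≤ Real.sqrt (∫ r in Ioc (-1 : ℝ) 0, ‖g r‖ ^ 2) :=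
    aux_l1_le_l2 g hg
  -- bound the g part
  have hgpart : ‖∫ r in (-1 : ℝ)..ξ, Complex.cos (s * (ξ - r)) * g r‖
      ≤ ∫ r in Ioc (-1 : ℝ) 0, ‖g r‖ := by
    calc ‖∫ r in (-1 : ℝ)..ξ, Complex.cos (s * (ξ - r)) * g r‖
        ≤ ∫ r in (-1 : ℝ)..ξ, ‖Complex.cos (s * (ξ - r)) * g r‖ :=
          intervalIntegral.norm_integral_le_integral_norm hξ1
      _ = ∫ r in Ioc (-1 : ℝ) ξ, ‖Complex.cos (s * (ξ - r)) * g r‖ :=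
          intervalIntegral.integral_of_le hξ1
      _ ≤ ∫ r in Ioc (-1 : ℝ) ξ, ‖g r‖ := by
          apply setIntegral_mono_on
          · exact hcosg.1.norm
          · exact IntegrableOn.mono_set hgInt.norm (Ioc_subset_Ioc le_rfl hξ0)
          · exact measurableSet_Ioc
          · intro r _
            rw [norm_mul, hcos_eq r]
            calc ‖((Real.cos (s * (ξ - r)) : ℝ) : ℂ)‖ * ‖g r‖
                ≤ 1 * ‖g r‖ := by
                  apply mul_le_mul_of_nonneg_right _ (norm_nonneg _)
                  rw [Complex.norm_real, Real.norm_eq_abs]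
                  exact Real.abs_cos_le_one _
              _ = ‖g r‖ := one_mul _
      _ ≤ ∫ r in Ioc (-1 : ℝ) 0, ‖g r‖ :=
          setIntegral_mono_set hgInt.norm
            (Filter.Eventually.of_forall fun r => norm_nonneg _)
            (Ioc_subset_Ioc le_rfl hξ0).eventuallyLE
  -- bound the f part
  have hfpart : ‖Complex.I * s * (∫ r in (-1 : ℝ)..ξ, Complex.cos (s * (ξ - r)) * f r)‖
      ≤ ‖f (-1)‖ + ∫ r in Ioc (-1 : ℝ) 0, ‖f' r‖ := by
    have heq : Complex.I * s * (∫ r in (-1 : ℝ)..ξ, Complex.cos (s * (ξ - r)) * f r)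
        = Complex.I * ((∫ r in (-1 : ℝ)..ξ, ((Real.sin (s * (ξ - r)) : ℝ) : ℂ) * f' r)
            + ((Real.sin (s * (ξ + 1)) : ℝ) : ℂ) * f (-1)) := by
      rw [← hkey]; ring
    rw [heq, norm_mul, Complex.norm_I, one_mul]
    have h1 : ‖∫ r in (-1 : ℝ)..ξ, ((Real.sin (s * (ξ - r)) : ℝ) : ℂ) * f' r‖
        ≤ ∫ r in Ioc (-1 : ℝ) 0, ‖f' r‖ := by
      calc ‖∫ r in (-1 : ℝ)..ξ, ((Real.sin (s * (ξ - r)) : ℝ) : ℂ) * f' r‖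
          ≤ ∫ r in (-1 : ℝ)..ξ, ‖((Real.sin (s * (ξ - r)) : ℝ) : ℂ) * f' r‖ :=
            intervalIntegral.norm_integral_le_integral_norm hξ1
        _ = ∫ r in Ioc (-1 : ℝ) ξ, ‖((Real.sin (s * (ξ - r)) : ℝ) : ℂ) * f' r‖ :=
            intervalIntegral.integral_of_le hξ1
        _ ≤ ∫ r in Ioc (-1 : ℝ) ξ, ‖f' r‖ := by
            apply setIntegral_mono_on
            · have : IntervalIntegrable (fun r => ((Real.sin (s * (ξ - r)) : ℝ) : ℂ) * f' r)
                  volume (-1) ξ := hf'II.continuousOn_mul (by fun_prop)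
              exact this.1.norm
            · exact IntegrableOn.mono_set hf'Int.norm (Ioc_subset_Ioc le_rfl hξ0)
            · exact measurableSet_Ioc
            · intro r _
              rw [norm_mul]
              calc ‖((Real.sin (s * (ξ - r)) : ℝ) : ℂ)‖ * ‖f' r‖
                  ≤ 1 * ‖f' r‖ := by
                    apply mul_le_mul_of_nonneg_right _ (norm_nonneg _)
                    rw [Complex.norm_real, Real.norm_eq_abs]
                    exact Real.abs_sin_le_one _
                _ = ‖f' r‖ := one_mul _
        _ ≤ ∫ r in Ioc (-1 : ℝ) 0, ‖f' r‖ :=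
            setIntegral_mono_set hf'Int.norm
              (Filter.Eventually.of_forall fun r => norm_nonneg _)
              (Ioc_subset_Ioc le_rfl hξ0).eventuallyLE
    have h2 : ‖((Real.sin (s * (ξ + 1)) : ℝ) : ℂ) * f (-1)‖ ≤ ‖f (-1)‖ := by
      rw [norm_mul, Complex.norm_real, Real.norm_eq_abs]
      calc |Real.sin (s * (ξ + 1))| * ‖f (-1)‖ ≤ 1 * ‖f (-1)‖ :=
            mul_le_mul_of_nonneg_right (Real.abs_sin_le_one _) (norm_nonneg _)
        _ = ‖f (-1)‖ := one_mul _
    calc ‖(∫ r in (-1 : ℝ)..ξ, ((Real.sin (s * (ξ - r)) : ℝ) : ℂ) * f' r)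
          + ((Real.sin (s * (ξ + 1)) : ℝ) : ℂ) * f (-1)‖
        ≤ ‖∫ r in (-1 : ℝ)..ξ, ((Real.sin (s * (ξ - r)) : ℝ) : ℂ) * f' r‖
          + ‖((Real.sin (s * (ξ + 1)) : ℝ) : ℂ) * f (-1)‖ := norm_add_le _ _
      _ ≤ (∫ r in Ioc (-1 : ℝ) 0, ‖f' r‖) + ‖f (-1)‖ := add_le_add h1 h2
      _ = ‖f (-1)‖ + ∫ r in Ioc (-1 : ℝ) 0, ‖f' r‖ := add_comm _ _
  -- put everything together
  have hsqrtA : Real.sqrt A ≤ Real.sqrt (A + B) := Real.sqrt_le_sqrt (by linarith)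
  have hsqrtB : Real.sqrt B ≤ Real.sqrt (A + B) := Real.sqrt_le_sqrt (by linarith)
  calc ‖∫ r in (-1 : ℝ)..ξ, Complex.cos (s * (ξ - r)) * (Complex.I * s * f r + g r)‖
      = ‖Complex.I * s * (∫ r in (-1 : ℝ)..ξ, Complex.cos (s * (ξ - r)) * f r)
        + ∫ r in (-1 : ℝ)..ξ, Complex.cos (s * (ξ - r)) * g r‖ := by rw [hsplit]
    _ ≤ ‖Complex.I * s * (∫ r in (-1 : ℝ)..ξ, Complex.cos (s * (ξ - r)) * f r)‖
        + ‖∫ r in (-1 : ℝ)..ξ, Complex.cos (s * (ξ - r)) * g r‖ := norm_add_le _ _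
    _ ≤ (‖f (-1)‖ + ∫ r in Ioc (-1 : ℝ) 0, ‖f' r‖) + ∫ r in Ioc (-1 : ℝ) 0, ‖g r‖ :=
        add_le_add hfpart hgpart
    _ ≤ ((Real.sqrt A + Real.sqrt B) + Real.sqrt B)
        + Real.sqrt (∫ r in Ioc (-1 : ℝ) 0, ‖g r‖ ^ 2) := by
        have : ‖f (-1)‖ ≤ Real.sqrt A + Real.sqrt B := by
          calc ‖f (-1)‖ ≤ (∫ r in Ioc (-1 : ℝ) 0, ‖f r‖) + ∫ r in Ioc (-1 : ℝ) 0, ‖f' r‖ := hfm1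
            _ ≤ Real.sqrt A + Real.sqrt B := add_le_add hfl2 hf'l2
        have h2 := hf'l2
        have h3 := hgl2
        linarith
    _ ≤ 3 * Real.sqrt (A + B) + Real.sqrt (∫ r in Ioc (-1 : ℝ) 0, ‖g r‖ ^ 2) := by
        linarith
end

section
/- For every λ ∈ ℂ with Re(λ) ≤ 0 and λ ≠ 0, if cosh(λ) + √λ·sinh(λ) = 0 then Re(λ) < 0. Equivalently, cosh(λ) + √λ·sinh(λ) has no zeros on the imaginary axis other than possibly λ = 0. -/
/-- For `λ ∈ ℂ` with `Re λ ≤ 0` and `λ ≠ 0`, if `cosh λ + √λ·sinh λ = 0` then `Re λ < 0`;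
i.e. `cosh λ + √λ·sinh λ` has no zeros on the imaginary axis other than possibly `λ = 0`. -/
theorem stmt_10 (lam : ℂ) (h1 : lam.re ≤ 0) (h2 : lam ≠ 0)
    (h3 : Complex.cosh lam + lam ^ ((1 : ℂ) / 2) * Complex.sinh lam = 0) :
    lam.re < 0 := by
  by_contra h
  have hre : lam.re = 0 := le_antisymm h1 (not_lt.mp h)
  set s := lam.im with hs
  have hlam : lam = (s : ℂ) * Complex.I := by
    apply Complex.ext <;> simp [hre, hs]
  have hs0 : s ≠ 0 := by
    intro h0
    apply h2
    rw [hlam, h0]; simp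
  have hw : lam ^ ((1:ℂ)/2) * lam ^ ((1:ℂ)/2) = lam := by
    rw [← Complex.cpow_add _ _ h2]; norm_num
  have h4 : lam ^ ((1:ℂ)/2) * Complex.sinh lam = -Complex.cosh lam := by
    linear_combination h3
  have h5 : lam * Complex.sinh lam ^ 2 = Complex.cosh lam ^ 2 := by
    have := congrArg (· ^ 2) h4
    simp only [mul_pow, neg_sq] at this
    linear_combination this - Complex.sinh lam ^ 2 * hw
  rw [hlam, Complex.sinh_mul_I, Complex.cosh_mul_I] at h5
  have h6 : ((s : ℂ) * Complex.I) * (Complex.sin s * Complex.I) ^ 2 =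
      Complex.cos s ^ 2 := h5
  have him := congrArg Complex.im h6
  have hrl : Complex.sin (s : ℂ) = (Real.sin s : ℂ) := (Complex.ofReal_sin s).symm
  have hcl : Complex.cos (s : ℂ) = (Real.cos s : ℂ) := (Complex.ofReal_cos s).symm
  rw [hrl, hcl] at him
  have him' : -(s * Real.sin s ^ 2) = 0 := by
    simpa [Complex.mul_im, Complex.mul_re, pow_two, Complex.I_re, Complex.I_im,
      Complex.sin_ofReal_re] using him
  have hsin : Real.sin s = 0 := by
    rcases mul_eq_zero.mp (by linarith [neg_eq_zero.mp him'] : s * Real.sin s ^ 2 = 0) with h' | h'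
    · exact absurd h' hs0
    · exact pow_eq_zero_iff (by norm_num) |>.mp h'
  have hcos : Real.cos s = 0 := by
    have hr := congrArg Complex.re h6
    rw [hrl, hcl] at hr
    simp [Complex.mul_re, Complex.mul_im, pow_two, Complex.I_re, Complex.I_im, hsin,
      Complex.cos_ofReal_re] at hr
    nlinarith [hr, sq_nonneg (Real.cos s)]
  have := Real.sin_sq_add_cos_sq s
  rw [hsin, hcos] at this
  norm_num at this
end
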